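/- For each integer n ≥ 1 define f_n(x₁,…,xₙ,t) = x₁⋯xₙ·(x₁ + ⋯ + xₙ + 1) + (−1)^{n+1}·t/(n+1)^{n+1}. Then for every n ≥ 2, all t ∈ ℂ, and all x₁,…,xₙ ∈ ℂ with xₙ ≠ 0 and xₙ ≠ −1, setting x̃ᵢ = xᵢ/(xₙ+1) for 1 ≤ i ≤ n−1 and t̃ = −nⁿ·t/((n+1)^{n+1}·xₙ·(xₙ+1)ⁿ), one has the identity f_n(x₁,…,xₙ,t) = xₙ·(xₙ+1)ⁿ·f_{n−1}(x̃₁,…,x̃_{n−1}, t̃). (This realizes the mirror family Y^{(n−1)}_t as a fibration by the mirror hypersurfaces Y^{(n−2)}_{t̃}, i.e., the mixed-twist construction with generalized functional invariant (1,n,1).) -/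
import Mathlib


noncomputable section

open Finset

/-- The defining polynomial `f_n(x₁,…,xₙ,t)` of the mirror family `Y^{(n-1)}_t` of
deformed Fermat hypersurfaces. -/
def fMirror (n : ℕ) (x : Fin n → ℂ) (t : ℂ) : ℂ :=
  (∏ i, x i) * ((∑ i, x i) + 1) + (-1)^(n + 1) * t / ((n : ℂ) + 1)^(n + 1)

/-- The mirror family `Y^{(n-1)}_t` is fibered by the mirror hypersurfaces
`Y^{(n-2)}_{t̃}`: the mixed-twist construction with generalized functional invariant
`(1,n,1)`.  Here `n = m + 1 ≥ 2`. -/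
theorem mirror_family_fibration (m : ℕ) (hm : 1 ≤ m)
    (x : Fin (m + 1) → ℂ) (t : ℂ)
    (h0 : x (Fin.last m) ≠ 0) (h1 : x (Fin.last m) ≠ -1) :
    fMirror (m + 1) x t =
      x (Fin.last m) * (x (Fin.last m) + 1)^(m + 1) *
        fMirror m (fun i => x i.castSucc / (x (Fin.last m) + 1))
          (-((m : ℂ) + 1)^(m + 1) * t /
            (((m : ℂ) + 2)^(m + 2) * x (Fin.last m) * (x (Fin.last m) + 1)^(m + 1))) := by
  set a := x (Fin.last m) with ha
  have ha1 : a + 1 ≠ 0 := by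
    intro h; apply h1; linear_combination h
  have hm1 : ((m : ℂ) + 1) ≠ 0 := by
    exact_mod_cast (Nat.cast_add_one_ne_zero (R := ℂ) m)
  have hm2 : ((m : ℂ) + 2) ≠ 0 := by
    have := Nat.cast_add_one_ne_zero (R := ℂ) (m + 1)
    push_cast at this
    intro h; apply this; linear_combination h
  simp only [fMirror, Fin.prod_univ_castSucc, Fin.sum_univ_castSucc, ← ha]
  rw [Finset.prod_div_distrib, ← Finset.sum_div]
  simp only [Finset.prod_const, Finset.card_univ, Fintype.card_fin]
  set P := ∏ i : Fin m, x i.castSucc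
  set S := ∑ i : Fin m, x i.castSucc
  push_cast
  rw [mul_add]
  have e1 : a * (a + 1) ^ (m + 1) * (P / (a + 1) ^ m * (S / (a + 1) + 1)) =
      P * a * (S + a + 1) := by
    rw [pow_succ]
    field_simp
    ring
  have hK : a * (a + 1) ^ (m + 1) ≠ 0 := mul_ne_zero h0 (pow_ne_zero _ ha1)
  have hE : ((m : ℂ) + 1) ^ (m + 1) ≠ 0 := pow_ne_zero _ hm1
  have e2 : a * (a + 1) ^ (m + 1) *
      ((-1 : ℂ) ^ (m + 1) * (-((m : ℂ) + 1) ^ (m + 1) * t /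
        (((m : ℂ) + 2) ^ (m + 2) * a * (a + 1) ^ (m + 1))) / ((m : ℂ) + 1) ^ (m + 1)) =
      (-1 : ℂ) ^ (m + 1 + 1) * t / ((m : ℂ) + 1 + 1) ^ (m + 1 + 1) := by
    have step : a * (a + 1) ^ (m + 1) *
        ((-1 : ℂ) ^ (m + 1) * (-((m : ℂ) + 1) ^ (m + 1) * t /
          (((m : ℂ) + 2) ^ (m + 2) * a * (a + 1) ^ (m + 1))) / ((m : ℂ) + 1) ^ (m + 1)) =
        (((-1 : ℂ) ^ (m + 1 + 1) * t * ((m : ℂ) + 1) ^ (m + 1)) * (a * (a + 1) ^ (m + 1))) /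
          (((m : ℂ) + 2) ^ (m + 2) * a * (a + 1) ^ (m + 1)) / ((m : ℂ) + 1) ^ (m + 1) := by
      rw [pow_succ (-1 : ℂ) (m + 1)]
      ring
    rw [step,
      show (((m : ℂ) + 2) ^ (m + 2) * a * (a + 1) ^ (m + 1)) =
        ((m : ℂ) + 2) ^ (m + 2) * (a * (a + 1) ^ (m + 1)) from by ring,
      mul_div_mul_right _ _ hK, div_div, mul_comm (((m : ℂ) + 2) ^ (m + 2)) (((m : ℂ) + 1) ^ (m + 1)),
      show ((-1 : ℂ) ^ (m + 1 + 1) * t * ((m : ℂ) + 1) ^ (m + 1)) =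
        (((m : ℂ) + 1) ^ (m + 1)) * ((-1 : ℂ) ^ (m + 1 + 1) * t) from by ring,
      mul_div_mul_left _ _ hE,
      show ((m : ℂ) + 1 + 1) = ((m : ℂ) + 2) from by ring]
  conv_rhs => rw [mul_add]
  rw [e1, e2]
  ring

end
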